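/- arXiv:1603.00591 — 2 statements merged into one kernel-verified Lean document; each statement's English description precedes it below -/
import Mathlib

section
/- Let {γₙ} be a sequence of pairwise disjoint C² curves in ℝ², each parametrized over a common interval by arc length, with tangent slopes everywhere at most √b and curvature everywhere at most √b, and suppose γₙ converges pointwise to a function γ. Then the convergence is uniform in C¹, γ is a C¹ curve, and the slopes of its tangent directions are everywhere at most √b. -/
/-!
Taylor's estimate `‖f t - f s - (t - s) • f' s‖ ≤ K (t - s)²` for a function with `K`-Lipschitz
derivative, applied to `γₘ - γₙ`, gives
`|t - s| ‖γₘ' s - γₙ' s‖ ≤ 2K (t - s)² + ‖(γₘ - γₙ) t‖ + ‖(γₘ - γₙ) s‖`; choosing `|t - s|` small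
and then `m, n` large shows that the derivatives converge pointwise. Unit speed and bounded
curvature make both `γₙ` and `γₙ'` uniformly Lipschitz, hence equicontinuous, so on the compact
interval pointwise convergence is uniform. The Taylor estimate passes to the limit and identifies
the limit of the derivatives as the derivative of the limit, and the slope bound survives because
the cone `|η| ≤ √b |ξ|` is closed.
-/

open Set Filter Topology

theorem EquicontinuousOn.tendstoUniformlyOn_of_tendsto {ι X α : Type*} [TopologicalSpace X]
    [UniformSpace α] {F : ι → X → α} {f : X → α} {l : Filter ι} {s : Set X}
    (hs : IsCompact s) (hF : EquicontinuousOn F s) (h : ∀ x ∈ s, Tendsto (F · x) l (𝓝 (f x))) :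
    TendstoUniformlyOn F f l s := by
  have := (EquicontinuousOn.tendsto_uniformOnFun_iff_pi' (𝔖 := {s}) (by simpa) (by simpa) l f).mpr
    (by simpa [tendsto_pi_nhds] using fun x hx => h x hx)
  exact UniformOnFun.tendsto_iff_tendstoUniformlyOn.mp this s rfl

theorem exists_mem_Icc_abs_sub_eq {c d s ℓ : ℝ} (hs : s ∈ Icc c d) (hℓ : 0 ≤ ℓ)
    (hℓd : 2 * ℓ ≤ d - c) : ∃ t ∈ Icc c d, |t - s| = ℓ := by
  rcases le_total s ((c + d) / 2) with h | h
  · exact ⟨s + ℓ, ⟨by linarith [hs.1], by linarith⟩, by rw [add_sub_cancel_left, abs_of_nonneg hℓ]⟩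
  · exact ⟨s - ℓ, ⟨by linarith, by linarith [hs.2]⟩,
      by rw [sub_sub_cancel_left, abs_neg, abs_of_nonneg hℓ]⟩

section
variable {E : Type*} [NormedAddCommGroup E] [NormedSpace ℝ E]

theorem Convex.norm_sub_sub_smul_le_of_lipschitzOnWith {f f' : ℝ → E} {K : NNReal} {s : Set ℝ}
    (hs : Convex ℝ s) (hf : ∀ x ∈ s, HasDerivWithinAt f (f' x) s x)
    (hf' : LipschitzOnWith K f' s) {x y : ℝ} (hx : x ∈ s) (hy : y ∈ s) :
    ‖f y - f x - (y - x) • f' x‖ ≤ K * (y - x) ^ 2 := by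
  have hxy : uIcc x y ⊆ s := by simpa [segment_eq_uIcc] using hs.segment_subset hx hy
  have hderiv : ∀ z ∈ uIcc x y,
      HasDerivWithinAt (fun z => f z - z • f' x) (f' z - f' x) (uIcc x y) z := fun z hz =>
    ((hf z (hxy hz)).mono hxy).sub (by simpa using (hasDerivWithinAt_id z _).smul_const (f' x))
  have hbound : ∀ z ∈ uIcc x y, ‖f' z - f' x‖ ≤ K * |y - x| := fun z hz =>
    (hf'.norm_sub_le (hxy hz) hx).trans
      (mul_le_mul_of_nonneg_left (abs_sub_left_of_mem_uIcc hz) K.coe_nonneg)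
  have := (convex_uIcc x y).norm_image_sub_le_of_norm_hasDerivWithin_le hderiv hbound
    left_mem_uIcc right_mem_uIcc
  calc ‖f y - f x - (y - x) • f' x‖ = ‖f y - y • f' x - (f x - x • f' x)‖ := by
        rw [sub_smul]; congr 1; abel
    _ ≤ K * |y - x| * ‖y - x‖ := this
    _ = K * (y - x) ^ 2 := by rw [Real.norm_eq_abs, mul_assoc, abs_mul_abs_self, sq]

theorem hasDerivWithinAt_of_norm_sub_sub_smul_le {f : ℝ → E} {v : E} {s : Set ℝ} {x : ℝ}
    (M : ℝ) (h : ∀ y ∈ s, ‖f y - f x - (y - x) • v‖ ≤ M * (y - x) ^ 2) :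
    HasDerivWithinAt f v s x := by
  rw [hasDerivWithinAt_iff_isLittleO]
  have hO : (fun y => f y - f x - (y - x) • v) =O[𝓝[s] x] fun y => ‖y - x‖ ^ 2 :=
    Asymptotics.IsBigO.of_bound M <| eventually_nhdsWithin_of_forall fun y hy => by
      simpa using h y hy
  exact hO.trans_isLittleO
    ((Asymptotics.isLittleO_pow_sub_sub x one_lt_two).mono nhdsWithin_le_nhds)

theorem Convex.abs_sub_mul_norm_le_of_lipschitzOnWith {f f' : ℝ → E} {K : NNReal} {s : Set ℝ}
    (hs : Convex ℝ s) (hf : ∀ x ∈ s, HasDerivWithinAt f (f' x) s x)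
    (hf' : LipschitzOnWith K f' s) {x y : ℝ} (hx : x ∈ s) (hy : y ∈ s) :
    |y - x| * ‖f' x‖ ≤ K * (y - x) ^ 2 + ‖f y‖ + ‖f x‖ :=
  calc |y - x| * ‖f' x‖ = ‖(f y - f x) - (f y - f x - (y - x) • f' x)‖ := by
        rw [sub_sub_cancel, norm_smul, Real.norm_eq_abs]
    _ ≤ ‖f y - f x‖ + ‖f y - f x - (y - x) • f' x‖ := norm_sub_le _ _
    _ ≤ (‖f y‖ + ‖f x‖) + K * (y - x) ^ 2 :=
        add_le_add (norm_sub_le _ _) (hs.norm_sub_sub_smul_le_of_lipschitzOnWith hf hf' hx hy)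
    _ = K * (y - x) ^ 2 + ‖f y‖ + ‖f x‖ := by ring

variable {ι : Type*} [SemilatticeSup ι] [Nonempty ι]

theorem cauchySeq_of_lipschitzOnWith_deriv {f f' : ι → ℝ → E} {K : NNReal} {c d s : ℝ}
    (hcd : c < d) (hf : ∀ n, ∀ x ∈ Icc c d, HasDerivWithinAt (f n) (f' n x) (Icc c d) x)
    (hf' : ∀ n, LipschitzOnWith K (f' n) (Icc c d))
    (hcauchy : ∀ x ∈ Icc c d, CauchySeq (f · x)) (hs : s ∈ Icc c d) :
    CauchySeq (f' · s) := by
  rw [Metric.cauchySeq_iff]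
  intro ε hε
  set ℓ := min ((d - c) / 2) (ε / (4 * K + 1))
  have hℓpos : 0 < ℓ := lt_min (by linarith) (by positivity)
  have hKℓ : 2 * K * ℓ ≤ ε / 2 := by
    have := min_le_right ((d - c) / 2) (ε / (4 * K + 1))
    rw [le_div_iff₀ (by positivity)] at this
    nlinarith [K.coe_nonneg]
  obtain ⟨t, ht, hts⟩ := exists_mem_Icc_abs_sub_eq hs hℓpos.le
    (by linarith [min_le_left ((d - c) / 2) (ε / (4 * K + 1))])
  obtain ⟨N₁, hN₁⟩ := Metric.cauchySeq_iff.mp (hcauchy s hs) (ε * ℓ / 4) (by positivity)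
  obtain ⟨N₂, hN₂⟩ := Metric.cauchySeq_iff.mp (hcauchy t ht) (ε * ℓ / 4) (by positivity)
  refine ⟨N₁ ⊔ N₂, fun m hm n hn => ?_⟩
  have hs_small := hN₁ m (le_sup_left.trans hm) n (le_sup_left.trans hn)
  have ht_small := hN₂ m (le_sup_right.trans hm) n (le_sup_right.trans hn)
  rw [dist_eq_norm] at hs_small ht_small ⊢
  have key := (convex_Icc c d).abs_sub_mul_norm_le_of_lipschitzOnWith
    (fun x hx => (hf m x hx).sub (hf n x hx)) ((hf' m).sub (hf' n)) hs ht
  rw [← sq_abs, hts, NNReal.coe_add] at key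
  simp only [Pi.sub_apply] at key
  by_contra! hge
  nlinarith

theorem exists_tendstoUniformlyOn_deriv_of_lipschitzOnWith [CompleteSpace E]
    {f f' : ι → ℝ → E} {F : ℝ → E} {K : NNReal} {c d : ℝ} (hcd : c < d)
    (hf : ∀ n, ∀ x ∈ Icc c d, HasDerivWithinAt (f n) (f' n x) (Icc c d) x)
    (hf' : ∀ n, LipschitzOnWith K (f' n) (Icc c d))
    (hF : ∀ x ∈ Icc c d, Tendsto (f · x) atTop (𝓝 (F x))) :
    ∃ G : ℝ → E, TendstoUniformlyOn f' G atTop (Icc c d) ∧ ContinuousOn G (Icc c d) ∧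
      ∀ x ∈ Icc c d, HasDerivWithinAt F (G x) (Icc c d) x := by
  choose! G hG using fun x (hx : x ∈ Icc c d) => cauchySeq_tendsto_of_complete
    (cauchySeq_of_lipschitzOnWith_deriv hcd hf hf' (fun y hy => (hF y hy).cauchySeq) hx)
  have hunif : TendstoUniformlyOn f' G atTop (Icc c d) :=
    (LipschitzOnWith.uniformEquicontinuousOn f' K hf').equicontinuousOn
      |>.tendstoUniformlyOn_of_tendsto isCompact_Icc hG
  refine ⟨G, hunif, hunif.continuousOn (Frequently.of_forall fun n => (hf' n).continuousOn),
    fun x hx => hasDerivWithinAt_of_norm_sub_sub_smul_le K fun y hy => ?_⟩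
  exact le_of_tendsto (((hF y hy).sub (hF x hx)).sub (((hG x hx).const_smul (y - x)))).norm
    (Eventually.of_forall fun n =>
      (convex_Icc c d).norm_sub_sub_smul_le_of_lipschitzOnWith (hf n) (hf' n) hx hy)

end

theorem pointwise_limit_of_disjoint_C2b_curves_is_C1_general
    (b c d : ℝ) (hcd : c < d)
    (γ : ℕ → ℝ → EuclideanSpace ℝ (Fin 2)) (γlim : ℝ → EuclideanSpace ℝ (Fin 2))
    (hsmooth : ∀ n, ContDiff ℝ 2 (γ n))
    (harc : ∀ n, ∀ s ∈ Icc c d, ‖deriv (γ n) s‖ = 1)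
    (hslope : ∀ n, ∀ s ∈ Icc c d,
      |(deriv (γ n) s) 1| ≤ Real.sqrt b * |(deriv (γ n) s) 0|)
    (hcurv : ∀ n, ∀ s ∈ Icc c d, ‖deriv (deriv (γ n)) s‖ ≤ Real.sqrt b)
    (hptwise : ∀ s ∈ Icc c d, Tendsto (fun n => γ n s) atTop (nhds (γlim s))) :
    TendstoUniformlyOn γ γlim atTop (Icc c d)
    ∧ ∃ g : ℝ → EuclideanSpace ℝ (Fin 2),
        TendstoUniformlyOn (fun n => deriv (γ n)) g atTop (Icc c d)
        ∧ ContinuousOn g (Icc c d)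
        ∧ (∀ s ∈ Icc c d, HasDerivWithinAt γlim (g s) (Icc c d) s)
        ∧ ∀ s ∈ Icc c d, |(g s) 1| ≤ Real.sqrt b * |(g s) 0| := by
  have hderiv : ∀ n, Differentiable ℝ (γ n) ∧ Differentiable ℝ (deriv (γ n)) := fun n => by
    obtain ⟨h₀, -, h₁⟩ := (contDiff_succ_iff_deriv (n := 1)).mp (hsmooth n)
    exact ⟨h₀, h₁.differentiable one_ne_zero⟩
  have hlip : ∀ n, LipschitzOnWith 1 (γ n) (Icc c d) := fun n =>
    (convex_Icc c d).lipschitzOnWith_of_nnnorm_deriv_le (fun x _ => (hderiv n).1 x)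
      fun x hx => (harc n x hx).le
  have hlip' : ∀ n, LipschitzOnWith ⟨√b, Real.sqrt_nonneg b⟩ (deriv (γ n)) (Icc c d) := fun n =>
    (convex_Icc c d).lipschitzOnWith_of_nnnorm_deriv_le (fun x _ => (hderiv n).2 x) (hcurv n)
  obtain ⟨g, hunif, hcont, hγlim⟩ := exists_tendstoUniformlyOn_deriv_of_lipschitzOnWith hcd
    (fun n x _ => ((hderiv n).1 x).hasDerivAt.hasDerivWithinAt) hlip' hptwise
  have hγunif : TendstoUniformlyOn γ γlim atTop (Icc c d) :=
    (LipschitzOnWith.uniformEquicontinuousOn γ 1 hlip).equicontinuousOn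
      |>.tendstoUniformlyOn_of_tendsto isCompact_Icc hptwise
  refine ⟨hγunif, g, hunif, hcont, hγlim, fun s hs => ?_⟩
  have hclosed : IsClosed {v : EuclideanSpace ℝ (Fin 2) | |v 1| ≤ √b * |v 0|} :=
    isClosed_le (by fun_prop) (by fun_prop)
  exact hclosed.mem_of_tendsto (hunif.tendsto_at hs) (Eventually.of_forall fun n => hslope n s hs)

/-- A sequence of pairwise disjoint `C²(b)`-curves (arc length parametrized,
tangent slopes `≤ √b`, curvature `≤ √b`) converging pointwise converges uniformly
in `C¹`, and the limit is a `C¹` curve with tangent slopes everywhere `≤ √b`. -/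
theorem pointwise_limit_of_disjoint_C2b_curves_is_C1
    (b c d : ℝ) (hb : 0 < b) (hcd : c < d)
    (γ : ℕ → ℝ → EuclideanSpace ℝ (Fin 2)) (γlim : ℝ → EuclideanSpace ℝ (Fin 2))
    (hsmooth : ∀ n, ContDiff ℝ 2 (γ n))
    (harc : ∀ n, ∀ s ∈ Icc c d, ‖deriv (γ n) s‖ = 1)
    (hslope : ∀ n, ∀ s ∈ Icc c d,
      |(deriv (γ n) s) 1| ≤ Real.sqrt b * |(deriv (γ n) s) 0|)
    (hcurv : ∀ n, ∀ s ∈ Icc c d, ‖deriv (deriv (γ n)) s‖ ≤ Real.sqrt b)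
    (hdisj : ∀ m n, m ≠ n → ∀ s ∈ Icc c d, ∀ t ∈ Icc c d, γ m s ≠ γ n t)
    (hptwise : ∀ s ∈ Icc c d, Tendsto (fun n => γ n s) atTop (nhds (γlim s))) :
    TendstoUniformlyOn γ γlim atTop (Icc c d)
    ∧ ∃ g : ℝ → EuclideanSpace ℝ (Fin 2),
        TendstoUniformlyOn (fun n => deriv (γ n)) g atTop (Icc c d)
        ∧ ContinuousOn g (Icc c d)
        ∧ (∀ s ∈ Icc c d, HasDerivWithinAt γlim (g s) (Icc c d) s)
        ∧ ∀ s ∈ Icc c d, |(g s) 1| ≤ Real.sqrt b * |(g s) 0| :=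
  pointwise_limit_of_disjoint_C2b_curves_is_C1_general b c d hcd γ γlim hsmooth harc hslope hcurv
    hptwise
end

section
/- In the abstract pressure setting, if t ≤ t_c then P(t) = -t·λ_M, and if t ≥ t_f then P(t) = -t·λ_m. -/
/-!
Both lines lie below `P` everywhere because `h ≥ 0`. Being a supremum of affine functions, `P` is
lower semicontinuous, so the set where `P` lies strictly above a line is open. If `P` were strictly
above the line at some `t ≤ t_c`, it would stay so slightly to the left of `t`, below `t_c`;
symmetrically at `t_f`.
-/

open Set Filter Topology

theorem LowerSemicontinuousAt.eventually_lt_of_continuousAt {α : Type*} [TopologicalSpace α]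
    {f g : α → ℝ} {t : α} (hf : LowerSemicontinuousAt f t) (hg : ContinuousAt g t)
    (hlt : g t < f t) : ∀ᶠ s in 𝓝 t, g s < f s :=
  (hf.add hg.neg.lowerSemicontinuousAt 0 (by simpa using hlt)).mono fun _ hs => by
    simpa using hs

section StrictComparison

variable {α : Type*} [TopologicalSpace α] [Preorder α] {f g : α → ℝ} {t : α}

theorem LowerSemicontinuousAt.le_of_mem_lowerBounds [(𝓝[<] t).NeBot]
    (hf : LowerSemicontinuousAt f t) (hg : ContinuousAt g t)
    (ht : t ∈ lowerBounds {s | g s < f s}) : f t ≤ g t := by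
  by_contra! hlt
  have hnear : ∀ᶠ s in 𝓝[<] t, g s < f s :=
    (hf.eventually_lt_of_continuousAt hg hlt).filter_mono nhdsWithin_le_nhds
  obtain ⟨s, hs, hst⟩ := (hnear.and self_mem_nhdsWithin).exists
  exact (ht hs).not_gt hst

theorem LowerSemicontinuousAt.le_of_mem_upperBounds [(𝓝[>] t).NeBot]
    (hf : LowerSemicontinuousAt f t) (hg : ContinuousAt g t)
    (ht : t ∈ upperBounds {s | g s < f s}) : f t ≤ g t := by
  by_contra! hlt
  have hnear : ∀ᶠ s in 𝓝[>] t, g s < f s :=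
    (hf.eventually_lt_of_continuousAt hg hlt).filter_mono nhdsWithin_le_nhds
  obtain ⟨s, hs, hst⟩ := (hnear.and self_mem_nhdsWithin).exists
  exact (ht hs).not_gt hst

end StrictComparison

section Pressure

variable {M : Type*} (h lam : M → ℝ)

noncomputable def pressure (t : ℝ) : ℝ := ⨆ μ, h μ - t * lam μ

variable {h lam}

theorem bddAbove_range_sub_mul (hh : BddAbove (range h)) (hl : BddAbove (range lam))
    (hl' : BddBelow (range lam)) (t : ℝ) : BddAbove (range fun μ => h μ - t * lam μ) := by
  obtain ⟨A, hA⟩ := hh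
  obtain ⟨B, hB⟩ := hl
  obtain ⟨b, hb⟩ := hl'
  refine ⟨A + max (-t * b) (-t * B), ?_⟩
  rintro _ ⟨μ, rfl⟩
  have := hA ⟨μ, rfl⟩
  have := hB ⟨μ, rfl⟩
  have := hb ⟨μ, rfl⟩
  rcases le_total 0 t with ht | ht
  · nlinarith [le_max_left (-t * b) (-t * B)]
  · nlinarith [le_max_right (-t * b) (-t * B)]

theorem lowerSemicontinuous_pressure
    (hbdd : ∀ t, BddAbove (range fun μ => h μ - t * lam μ)) :
    LowerSemicontinuous (pressure h lam) :=
  lowerSemicontinuous_ciSup hbdd fun _ =>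
    (by fun_prop : Continuous _).lowerSemicontinuous

variable (hh0 : ∀ μ, 0 ≤ h μ) (hbdd : ∀ t, BddAbove (range fun μ => h μ - t * lam μ))
include hh0 hbdd

theorem iSup_neg_mul_le_pressure (t : ℝ) : ⨆ μ, -t * lam μ ≤ pressure h lam t :=
  ciSup_mono (hbdd t) fun μ => by linarith [hh0 μ]

theorem neg_mul_le_pressure (t : ℝ) (μ : M) : -t * lam μ ≤ pressure h lam t := by
  calc -t * lam μ ≤ h μ - t * lam μ := by linarith [hh0 μ]
    _ ≤ pressure h lam t := le_ciSup (hbdd t) μ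

theorem neg_mul_sSup_le_pressure [Nonempty M] (hl : BddAbove (range lam)) (t : ℝ) :
    -t * sSup (range lam) ≤ pressure h lam t := by
  rcases le_total t 0 with ht | ht
  · calc -t * sSup (range lam) = ⨆ μ, -t * lam μ := Real.mul_iSup_of_nonneg (by linarith) lam
      _ ≤ pressure h lam t := iSup_neg_mul_le_pressure hh0 hbdd t
  · obtain ⟨μ⟩ := ‹Nonempty M›
    calc -t * sSup (range lam) ≤ -t * lam μ :=
          mul_le_mul_of_nonpos_left (le_csSup hl ⟨μ, rfl⟩) (by linarith)
      _ ≤ pressure h lam t := neg_mul_le_pressure hh0 hbdd t μ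

theorem neg_mul_sInf_le_pressure [Nonempty M] (hl : BddBelow (range lam)) (t : ℝ) :
    -t * sInf (range lam) ≤ pressure h lam t := by
  rcases le_total 0 t with ht | ht
  · calc -t * sInf (range lam) = ⨆ μ, -t * lam μ := Real.mul_iInf_of_nonpos (by linarith) lam
      _ ≤ pressure h lam t := iSup_neg_mul_le_pressure hh0 hbdd t
  · obtain ⟨μ⟩ := ‹Nonempty M›
    calc -t * sInf (range lam) ≤ -t * lam μ :=
          mul_le_mul_of_nonneg_left (csInf_le hl ⟨μ, rfl⟩) (by linarith)
      _ ≤ pressure h lam t := neg_mul_le_pressure hh0 hbdd t μ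

end Pressure

/-- In the abstract pressure setting: if `t ≤ t_c` (i.e. `t` is a lower bound of
`{s : P s > -s·λ_M}`) then `P t = -t·λ_M`, and if `t ≥ t_f` (i.e. `t` is an upper
bound of `{s : P s > -s·λ_m}`) then `P t = -t·λ_m`. -/
theorem pressure_affine_outside_freezing_points
    {M : Type*} [Nonempty M] (h lam : M → ℝ)
    (hh0 : ∀ μ, 0 ≤ h μ) (hhbdd : BddAbove (range h))
    (hlbdd : BddAbove (range lam)) (hlbdd' : BddBelow (range lam)) :
    (∀ t : ℝ,
      t ∈ lowerBounds {s : ℝ |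
        sSup (range fun μ => h μ - s * lam μ) > -s * sSup (range lam)} →
      sSup (range fun μ => h μ - t * lam μ) = -t * sSup (range lam))
    ∧ (∀ t : ℝ,
      t ∈ upperBounds {s : ℝ |
        sSup (range fun μ => h μ - s * lam μ) > -s * sInf (range lam)} →
      sSup (range fun μ => h μ - t * lam μ) = -t * sInf (range lam)) := by
  have hbdd := bddAbove_range_sub_mul hhbdd hlbdd hlbdd'
  have hP := lowerSemicontinuous_pressure hbdd
  have hline : ∀ c : ℝ, Continuous fun s : ℝ => -s * c := by fun_prop
  refine ⟨fun t ht => le_antisymm ?_ (neg_mul_sSup_le_pressure hh0 hbdd hlbdd t),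
    fun t ht => le_antisymm ?_ (neg_mul_sInf_le_pressure hh0 hbdd hlbdd' t)⟩
  · exact (hP.lowerSemicontinuousAt t).le_of_mem_lowerBounds (hline _).continuousAt ht
  · exact (hP.lowerSemicontinuousAt t).le_of_mem_upperBounds (hline _).continuousAt ht
end
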